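/- arXiv:2102.12607 — 8 statements merged into one kernel-verified Lean document; each statement's English description precedes it below -/
import Mathlib

section
/- Let d ≥ 1 be an integer, η ∈ (0,1), and α > dη/(2-2η). Then there exists a constant C > 0 (depending only on d, α and η) such that for every measurable v : ℝ^d → ℂ belonging to L²(ℝ^d) and with finite weighted norm ‖v‖_{L²_α}, one has ‖v‖_{L^{2-2η}(ℝ^d)} ≤ C · ‖v‖_{L²(ℝ^d)}^{1 - dη/(2α(1-η))} · ‖v‖_{L²_α}^{dη/(2α(1-η))}. -/
set_option maxHeartbeats 1000000

open MeasureTheory ENNReal Metric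

theorem tail_scaling (d : ℕ) (γ : ℝ) {ρ : ℝ} (hρ : 0 < ρ) :
    ∫⁻ x in {x : EuclideanSpace ℝ (Fin d) | ρ ≤ ‖x‖}, ENNReal.ofReal (‖x‖ ^ (-γ)) ∂volume
      = ENNReal.ofReal (ρ ^ ((d:ℝ) - γ)) *
        ∫⁻ x in {x : EuclideanSpace ℝ (Fin d) | 1 ≤ ‖x‖}, ENNReal.ofReal (‖x‖ ^ (-γ)) ∂volume := by
  set E := EuclideanSpace ℝ (Fin d)
  set μ : Measure E := volume
  have hmeasfun : Measurable fun x : E => ENNReal.ofReal (‖x‖ ^ (-γ)) := by fun_prop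
  have hsm : ∀ c : ℝ, MeasurableSet {x : E | c ≤ ‖x‖} :=
    fun c => (isClosed_le continuous_const continuous_norm).measurableSet
  have hg1m : Measurable (({x : E | 1 ≤ ‖x‖}).indicator
      (fun x => ENNReal.ofReal (‖x‖ ^ (-γ)))) := hmeasfun.indicator (hsm 1)
  have hgρm : Measurable (({x : E | ρ ≤ ‖x‖}).indicator
      (fun x => ENNReal.ofReal (‖x‖ ^ (-γ)))) := hmeasfun.indicator (hsm ρ)
  have key : ∀ x : E, ({x : E | ρ ≤ ‖x‖}).indicator
        (fun x => ENNReal.ofReal (‖x‖ ^ (-γ))) (ρ • x)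
      = ENNReal.ofReal (ρ ^ (-γ)) * ({x : E | 1 ≤ ‖x‖}).indicator
        (fun x => ENNReal.ofReal (‖x‖ ^ (-γ))) x := by
    intro x
    have hnorm : ‖ρ • x‖ = ρ * ‖x‖ := by
      rw [norm_smul, Real.norm_eq_abs, abs_of_pos hρ]
    have hmem : ρ • x ∈ {x : E | ρ ≤ ‖x‖} ↔ x ∈ {x : E | 1 ≤ ‖x‖} := by
      simp only [Set.mem_setOf_eq, hnorm]
      constructor
      · intro h; nlinarith
      · intro h; nlinarith
    by_cases hx : x ∈ {x : E | 1 ≤ ‖x‖}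
    · rw [Set.indicator_of_mem (hmem.mpr hx), Set.indicator_of_mem hx, hnorm,
        Real.mul_rpow hρ.le (norm_nonneg x), ENNReal.ofReal_mul (Real.rpow_nonneg hρ.le _)]
    · rw [Set.indicator_of_notMem (fun h => hx (hmem.mp h)), Set.indicator_of_notMem hx, mul_zero]
  have hmap : ∫⁻ x, ({x : E | ρ ≤ ‖x‖}).indicator
        (fun x => ENNReal.ofReal (‖x‖ ^ (-γ))) (ρ • x) ∂μ
      = ENNReal.ofReal (abs ((ρ ^ d)⁻¹)) * ∫⁻ x, ({x : E | ρ ≤ ‖x‖}).indicator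
        (fun x => ENNReal.ofReal (‖x‖ ^ (-γ))) x ∂μ := by
    rw [← lintegral_map hgρm (measurable_const_smul ρ)]
    have h2 := Measure.map_addHaar_smul μ (r := ρ) hρ.ne'
    rw [finrank_euclideanSpace_fin] at h2
    rw [h2, lintegral_smul_measure, smul_eq_mul]
  have hρd : (0:ℝ) < ρ ^ d := pow_pos hρ d
  have heq : ENNReal.ofReal ((ρ ^ d)⁻¹) * ∫⁻ x, ({x : E | ρ ≤ ‖x‖}).indicator
        (fun x => ENNReal.ofReal (‖x‖ ^ (-γ))) x ∂μ
      = ENNReal.ofReal (ρ ^ (-γ)) * ∫⁻ x, ({x : E | 1 ≤ ‖x‖}).indicator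
        (fun x => ENNReal.ofReal (‖x‖ ^ (-γ))) x ∂μ := by
    rw [← abs_of_pos (inv_pos.mpr hρd), ← hmap]
    simp_rw [key]
    exact lintegral_const_mul' _ _ ENNReal.ofReal_ne_top
  have hcancel : ENNReal.ofReal (ρ ^ d) * ENNReal.ofReal ((ρ ^ d)⁻¹) = 1 := by
    rw [← ENNReal.ofReal_mul hρd.le, mul_inv_cancel₀ hρd.ne', ENNReal.ofReal_one]
  rw [← lintegral_indicator (hsm ρ) _, ← lintegral_indicator (hsm 1) _]
  calc ∫⁻ x, ({x : E | ρ ≤ ‖x‖}).indicator (fun x => ENNReal.ofReal (‖x‖ ^ (-γ))) x ∂μ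
      = ENNReal.ofReal (ρ ^ d) * (ENNReal.ofReal ((ρ ^ d)⁻¹)
          * ∫⁻ x, ({x : E | ρ ≤ ‖x‖}).indicator (fun x => ENNReal.ofReal (‖x‖ ^ (-γ))) x ∂μ) := by
        rw [← mul_assoc, hcancel, one_mul]
    _ = ENNReal.ofReal (ρ ^ ((d:ℝ) - γ)) * ∫⁻ x, ({x : E | 1 ≤ ‖x‖}).indicator
          (fun x => ENNReal.ofReal (‖x‖ ^ (-γ))) x ∂μ := by
        rw [heq, ← mul_assoc, ← ENNReal.ofReal_mul hρd.le]
        congr 2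
        rw [← Real.rpow_natCast ρ d, ← Real.rpow_add hρ]
        ring_nf

theorem tail_finite (d : ℕ) (γ : ℝ) (hγ : (d:ℝ) < γ) :
    ∫⁻ x in {x : EuclideanSpace ℝ (Fin d) | 1 ≤ ‖x‖}, ENNReal.ofReal (‖x‖ ^ (-γ)) ∂volume < ∞ := by
  set E := EuclideanSpace ℝ (Fin d)
  have hγ0 : 0 < γ := lt_of_le_of_lt (Nat.cast_nonneg d) hγ
  have hpt : ∀ x : E, x ∈ {x : E | 1 ≤ ‖x‖} →
      ENNReal.ofReal (‖x‖ ^ (-γ)) ≤ ENNReal.ofReal (2 ^ γ * (1 + ‖x‖) ^ (-γ)) := by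
    intro x hx
    apply ENNReal.ofReal_le_ofReal
    have hx1 : (1:ℝ) ≤ ‖x‖ := hx
    have hxpos : (0:ℝ) < ‖x‖ := lt_of_lt_of_le one_pos hx1
    have h2 : (1 + ‖x‖) ≤ 2 * ‖x‖ := by linarith
    have := Real.rpow_le_rpow_of_nonpos hxpos (by linarith : ‖x‖ ≤ 1 + ‖x‖) (neg_nonpos.mpr hγ0.le)
    calc ‖x‖ ^ (-γ) = 2 ^ γ * (2 * ‖x‖) ^ (-γ) := by
          rw [Real.mul_rpow (by norm_num) hxpos.le, ← mul_assoc, ← Real.rpow_add (by norm_num)]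
          simp
      _ ≤ 2 ^ γ * (1 + ‖x‖) ^ (-γ) := by
          apply mul_le_mul_of_nonneg_left _ (Real.rpow_nonneg (by norm_num) _)
          exact Real.rpow_le_rpow_of_nonpos (by linarith) h2 (neg_nonpos.mpr hγ0.le)
  calc ∫⁻ x in {x : E | 1 ≤ ‖x‖}, ENNReal.ofReal (‖x‖ ^ (-γ)) ∂volume
      ≤ ∫⁻ x in {x : E | 1 ≤ ‖x‖}, ENNReal.ofReal (2 ^ γ * (1 + ‖x‖) ^ (-γ)) ∂volume :=
        setLIntegral_mono (by fun_prop) hpt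
    _ ≤ ∫⁻ x : E, ENNReal.ofReal (2 ^ γ * (1 + ‖x‖) ^ (-γ)) ∂volume :=
        setLIntegral_le_lintegral _ _
    _ = ENNReal.ofReal (2 ^ γ) * ∫⁻ x : E, ENNReal.ofReal ((1 + ‖x‖) ^ (-γ)) ∂volume := by
        simp_rw [ENNReal.ofReal_mul (Real.rpow_nonneg (by norm_num : (0:ℝ) ≤ 2) γ)]
        exact lintegral_const_mul' _ _ ENNReal.ofReal_ne_top
    _ < ∞ := by
        apply ENNReal.mul_lt_top ENNReal.ofReal_lt_top
        have := finite_integral_one_add_norm (E := E) (μ := volume) (r := γ) ?_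
        · exact this
        · rwa [finrank_euclideanSpace_fin]

/-- Weighted interpolation inequality: for `η ∈ (0,1)` and `α > dη/(2-2η)`,
`‖v‖_{L^{2-2η}} ≤ C ‖v‖_{L²}^{1 - dη/(2α(1-η))} ‖v‖_{L²_α}^{dη/(2α(1-η))}`. -/
theorem stmt_0 (d : ℕ) (hd : 1 ≤ d) (η : ℝ) (hη : η ∈ Set.Ioo (0:ℝ) 1)
    (α : ℝ) (hα : (d : ℝ) * η / (2 - 2 * η) < α) :
    ∃ C : ℝ, 0 < C ∧ ∀ v : EuclideanSpace ℝ (Fin d) → ℂ, Measurable v →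
      eLpNorm v 2 (volume : Measure (EuclideanSpace ℝ (Fin d))) < ⊤ →
      eLpNorm (fun x => ((1 + ‖x‖ ^ 2) ^ (α / 2) : ℝ) • v x) 2
        (volume : Measure (EuclideanSpace ℝ (Fin d))) < ⊤ →
      eLpNorm v (ENNReal.ofReal (2 - 2 * η))
          (volume : Measure (EuclideanSpace ℝ (Fin d))) ≤
        ENNReal.ofReal C *
          (eLpNorm v 2 (volume : Measure (EuclideanSpace ℝ (Fin d)))) ^
            (1 - (d : ℝ) * η / (2 * α * (1 - η))) *
          (eLpNorm (fun x => ((1 + ‖x‖ ^ 2) ^ (α / 2) : ℝ) • v x) 2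
              (volume : Measure (EuclideanSpace ℝ (Fin d)))) ^
            ((d : ℝ) * η / (2 * α * (1 - η))) := by
  obtain ⟨hη0, hη1⟩ := hη
  have hη0' : η ≠ 0 := hη0.ne'
  have hη1' : (1:ℝ) - η ≠ 0 := by linarith
  haveI hnt : Nontrivial (EuclideanSpace ℝ (Fin d)) := by
    apply Module.nontrivial_of_finrank_pos (R := ℝ)
    rw [finrank_euclideanSpace_fin]; exact hd
  set E := EuclideanSpace ℝ (Fin d) with hE
  set p : ℝ := 2 - 2*η with hp_def
  have hp0 : (0:ℝ) < p := by rw [hp_def]; linarith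
  have hp2 : p < 2 := by rw [hp_def]; linarith
  have hα0 : (0:ℝ) < α := by
    refine lt_of_le_of_lt ?_ hα
    positivity
  set θ : ℝ := (d:ℝ)*η/(2*α*(1-η)) with hθ_def
  set γ : ℝ := 2*α*(1-η)/η with hγ_def
  have hγd : (d:ℝ) < γ := by
    rw [div_lt_iff₀ (by linarith : (0:ℝ) < 2 - 2*η)] at hα
    rw [hγ_def, lt_div_iff₀ hη0]
    nlinarith
  have hγ0 : (0:ℝ) < γ := lt_of_le_of_lt (Nat.cast_nonneg d) hγd
  set V : ℝ≥0∞ := volume (Metric.ball (0 : E) 1) with hV_def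
  set T1 : ℝ≥0∞ := ∫⁻ x in {x : E | 1 ≤ ‖x‖}, ENNReal.ofReal (‖x‖ ^ (-γ)) ∂volume with hT1_def
  have hVfin : V ≠ ∞ := measure_ball_lt_top.ne
  have hV0 : V ≠ 0 := (measure_ball_pos _ _ one_pos).ne'
  have hT1fin : T1 ≠ ∞ := (tail_finite d γ hγd).ne
  set v0 : ℝ := V.toReal with hv0_def
  set t1 : ℝ := T1.toReal with ht1_def
  have hv0 : 0 < v0 := ENNReal.toReal_pos hV0 hVfin
  have ht1 : 0 ≤ t1 := ENNReal.toReal_nonneg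
  have hV_eq : V = ENNReal.ofReal v0 := (ENNReal.ofReal_toReal hVfin).symm
  have hT1_eq : T1 = ENNReal.ofReal t1 := (ENNReal.ofReal_toReal hT1fin).symm
  have hCpos : 0 < (v0^η + t1^η)^((1:ℝ)/p) + 1 := by
    have h1 : (0:ℝ) ≤ (v0^η + t1^η)^((1:ℝ)/p) :=
      Real.rpow_nonneg (add_nonneg (Real.rpow_nonneg hv0.le _) (Real.rpow_nonneg ht1 _)) _
    linarith
  refine ⟨(v0^η + t1^η) ^ ((1:ℝ)/p) + 1, hCpos, ?_⟩
  intro v hv h2fin hwfin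
  set f : E → ℝ≥0∞ := fun x => (‖v x‖₊ : ℝ≥0∞) with hf_def
  have hfm : Measurable f := hv.enorm
  set w : E → ℝ≥0∞ := fun x => ENNReal.ofReal ((1+‖x‖^2) ^ (α/2)) with hw_def
  have hwm : Measurable w := by rw [hw_def]; fun_prop
  have hbase : ∀ x : E, (0:ℝ) < 1 + ‖x‖^2 := fun x => by positivity
  have hwpos : ∀ x : E, w x ≠ 0 := fun x => by
    rw [hw_def]
    exact (ENNReal.ofReal_pos.mpr (Real.rpow_pos_of_pos (hbase x) _)).ne'
  have hwfin' : ∀ x : E, w x ≠ ∞ := fun x => ENNReal.ofReal_ne_top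
  have hw1 : ∀ x : E, 1 ≤ w x := fun x => by
    rw [hw_def, show (1:ℝ≥0∞) = ENNReal.ofReal 1 by simp]
    exact ENNReal.ofReal_le_ofReal (Real.one_le_rpow (by nlinarith [sq_nonneg ‖x‖]) (by positivity))
  have hsmul_norm : ∀ x : E, (‖((1 + ‖x‖^2) ^ (α/2) : ℝ) • v x‖₊ : ℝ≥0∞) = w x * f x := by
    intro x
    rw [nnnorm_smul, ENNReal.coe_mul, hw_def, hf_def,
      ← enorm_eq_nnnorm ((1 + ‖x‖^2) ^ (α/2) : ℝ), Real.enorm_eq_ofReal (Real.rpow_nonneg (hbase x).le _)]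
  set A : ℝ≥0∞ := ∫⁻ x, f x ^ (2:ℝ) ∂(volume : Measure E) with hA_def
  set B : ℝ≥0∞ := ∫⁻ x, (w x * f x) ^ (2:ℝ) ∂(volume : Measure E) with hB_def
  have heA : eLpNorm v 2 (volume : Measure E) = A ^ ((1:ℝ)/2) := by
    rw [eLpNorm_eq_lintegral_rpow_enorm_toReal (by norm_num) (by norm_num), hA_def, hf_def]
    simp only [enorm_eq_nnnorm]
    norm_num
    rfl
  have heB : eLpNorm (fun x => ((1 + ‖x‖ ^ 2) ^ (α / 2) : ℝ) • v x) 2 (volume : Measure E)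
      = B ^ ((1:ℝ)/2) := by
    rw [eLpNorm_eq_lintegral_rpow_enorm_toReal (by norm_num) (by norm_num), hB_def]
    simp only [enorm_eq_nnnorm]
    simp_rw [hsmul_norm]
    norm_num
    rfl
  have hAfin : A ≠ ∞ := by
    intro h
    apply h2fin.ne
    rw [heA, h, ENNReal.top_rpow_of_pos (by norm_num)]
  have hBfin : B ≠ ∞ := by
    intro h
    apply hwfin.ne
    rw [heB, h, ENNReal.top_rpow_of_pos (by norm_num)]
  have hP_ne0 : (ENNReal.ofReal p) ≠ 0 := by
    simp only [ne_eq, ENNReal.ofReal_eq_zero, not_le]; exact hp0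
  have heP : eLpNorm v (ENNReal.ofReal p) (volume : Measure E)
      = (∫⁻ x, f x ^ p ∂(volume : Measure E)) ^ ((1:ℝ)/p) := by
    rw [eLpNorm_eq_lintegral_rpow_enorm_toReal hP_ne0 ENNReal.ofReal_ne_top,
      ENNReal.toReal_ofReal hp0.le, hf_def]
    rfl
  by_cases hA0 : A = 0
  · have h1 : ∀ᵐ x ∂(volume : Measure E), f x ^ (2:ℝ) = 0 :=
      (lintegral_eq_zero_iff (by fun_prop)).mp hA0
    have hv0' : v =ᵐ[(volume : Measure E)] 0 := by
      filter_upwards [h1] with x hx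
      rw [ENNReal.rpow_eq_zero_iff] at hx
      rcases hx with ⟨hx, -⟩ | ⟨-, hx⟩
      · simpa [hf_def] using hx
      · norm_num at hx
    rw [eLpNorm_congr_ae hv0', eLpNorm_zero]
    exact zero_le
  have hAB : A ≤ B := by
    refine lintegral_mono fun x => ENNReal.rpow_le_rpow ?_ (by norm_num)
    exact le_mul_of_one_le_left zero_le (hw1 x)
  have hB0 : B ≠ 0 := fun h => hA0 (le_antisymm (h ▸ hAB) zero_le)
  set a : ℝ := A.toReal with ha_def
  set b : ℝ := B.toReal with hb_def
  have ha0 : 0 < a := ENNReal.toReal_pos hA0 hAfin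
  have hb0 : 0 < b := ENNReal.toReal_pos hB0 hBfin
  have hA_eq : A = ENNReal.ofReal a := (ENNReal.ofReal_toReal hAfin).symm
  have hB_eq : B = ENNReal.ofReal b := (ENNReal.ofReal_toReal hBfin).symm
  set ρ : ℝ := (b/a) ^ ((1:ℝ)/(2*α)) with hρ_def
  have hρ0 : 0 < ρ := Real.rpow_pos_of_pos (div_pos hb0 ha0) _
  set s : Set E := Metric.ball 0 ρ with hs_def
  have hs : MeasurableSet s := measurableSet_ball
  have hcomp : sᶜ = {x : E | ρ ≤ ‖x‖} := by
    ext x; simp [hs_def, mem_ball_zero_iff, not_lt]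
  have hpq : ((2:ℝ)/p).HolderConjugate (1/η) := by
    rw [Real.holderConjugate_iff]
    constructor
    · exact (one_lt_div hp0).mpr hp2
    · rw [hp_def, one_div, inv_inv, inv_div]; field_simp; ring
  have hexp1 : (1:ℝ)/(2/p) = 1 - η := by rw [one_div_div, hp_def]; ring
  have hexp2 : (1:ℝ)/(1/η) = η := one_div_one_div η
  have hpp2 : p * (2/p) = 2 := by field_simp
  -- ball estimate
  have hball : ∫⁻ x in s, f x ^ p ∂(volume : Measure E)
      ≤ A ^ ((1:ℝ)-η) * (ENNReal.ofReal (ρ^d) * V) ^ η := by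
    have hH := ENNReal.lintegral_mul_le_Lp_mul_Lq ((volume : Measure E).restrict s) hpq
      (f := fun x => f x ^ p) (g := fun _ => (1:ℝ≥0∞))
      (by fun_prop : Measurable fun x => f x ^ p).aemeasurable aemeasurable_const
    simp only [Pi.mul_apply, mul_one, ENNReal.one_rpow] at hH
    rw [setLIntegral_one, hexp1, hexp2] at hH
    simp_rw [← ENNReal.rpow_mul, hpp2] at hH
    have hμs : volume s = ENNReal.ofReal (ρ^d) * V := by
      rw [hs_def, hV_def, Measure.addHaar_ball _ _ hρ0.le, finrank_euclideanSpace_fin]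
    calc ∫⁻ x in s, f x ^ p ∂(volume : Measure E)
        ≤ (∫⁻ x in s, f x ^ (2:ℝ) ∂(volume : Measure E)) ^ ((1:ℝ)-η) * (volume s) ^ η := hH
      _ ≤ A ^ ((1:ℝ)-η) * (ENNReal.ofReal (ρ^d) * V) ^ η := by
          rw [hμs]
          exact mul_le_mul_left
            (ENNReal.rpow_le_rpow (setLIntegral_le_lintegral _ _) (by linarith)) _
  -- tail estimate
  have htail : ∫⁻ x in sᶜ, f x ^ p ∂(volume : Measure E)
      ≤ B ^ ((1:ℝ)-η) * (ENNReal.ofReal (ρ ^ ((d:ℝ)-γ)) * T1) ^ η := by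
    have hpt : ∀ x : E, f x ^ p = ((w x * f x) ^ p) * (w x) ^ (-p) := by
      intro x
      have h1 : (w x)^p * (w x)^(-p) = 1 := by
        rw [← ENNReal.rpow_add p (-p) (hwpos x) (hwfin' x)]; simp
      calc f x ^ p = ((w x)^p * (w x)^(-p)) * f x ^ p := by rw [h1, one_mul]
        _ = ((w x * f x) ^ p) * (w x) ^ (-p) := by
            rw [ENNReal.mul_rpow_of_nonneg _ _ hp0.le]; ring
    have hH := ENNReal.lintegral_mul_le_Lp_mul_Lq ((volume : Measure E).restrict sᶜ) hpq
      (f := fun x => (w x * f x) ^ p) (g := fun x => (w x) ^ (-p))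
      (by fun_prop : Measurable fun x => (w x * f x) ^ p).aemeasurable
      (by fun_prop : Measurable fun x => (w x) ^ (-p)).aemeasurable
    simp only [Pi.mul_apply] at hH
    rw [hexp1, hexp2] at hH
    simp_rw [← ENNReal.rpow_mul, hpp2] at hH
    have hwpt : ∀ x : E, ((w x)^(-p * ((1:ℝ)/η))) = ENNReal.ofReal ((1+‖x‖^2) ^ (-(γ/2))) := by
      intro x
      rw [hw_def]
      rw [ENNReal.ofReal_rpow_of_pos (Real.rpow_pos_of_pos (hbase x) _),
        ← Real.rpow_mul (hbase x).le]
      congr 1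
      rw [hp_def, hγ_def]; field_simp
    have hwint : ∫⁻ x in sᶜ, ((w x)^(-p * ((1:ℝ)/η))) ∂(volume : Measure E)
        ≤ ENNReal.ofReal (ρ ^ ((d:ℝ)-γ)) * T1 := by
      simp_rw [hwpt]
      rw [hcomp]
      calc ∫⁻ x in {x : E | ρ ≤ ‖x‖}, ENNReal.ofReal ((1+‖x‖^2) ^ (-(γ/2))) ∂volume
          ≤ ∫⁻ x in {x : E | ρ ≤ ‖x‖}, ENNReal.ofReal (‖x‖ ^ (-γ)) ∂volume := by
            refine setLIntegral_mono (by fun_prop) fun x hx => ?_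
            have hx0 : (0:ℝ) < ‖x‖ := lt_of_lt_of_le hρ0 hx
            refine ENNReal.ofReal_le_ofReal ?_
            calc (1+‖x‖^2) ^ (-(γ/2))
                ≤ (‖x‖^2) ^ (-(γ/2)) :=
                  Real.rpow_le_rpow_of_nonpos (by positivity) (by nlinarith)
                    (by linarith : -(γ/2) ≤ 0)
              _ = ‖x‖ ^ (-γ) := by
                  rw [← Real.rpow_natCast _ 2, ← Real.rpow_mul hx0.le]
                  congr 1
                  push_cast; ring
        _ = ENNReal.ofReal (ρ ^ ((d:ℝ)-γ)) * T1 := by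
            rw [hT1_def]; exact tail_scaling d γ hρ0
    calc ∫⁻ x in sᶜ, f x ^ p ∂(volume : Measure E)
        = ∫⁻ x in sᶜ, ((w x * f x) ^ p) * (w x) ^ (-p) ∂(volume : Measure E) := by
          simp_rw [hpt]
      _ ≤ (∫⁻ x in sᶜ, (w x * f x) ^ (2:ℝ) ∂(volume : Measure E)) ^ ((1:ℝ)-η)
            * (∫⁻ x in sᶜ, ((w x)^(-p * ((1:ℝ)/η))) ∂(volume : Measure E)) ^ η := hH
      _ ≤ B ^ ((1:ℝ)-η) * (ENNReal.ofReal (ρ ^ ((d:ℝ)-γ)) * T1) ^ η := by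
          exact mul_le_mul'
            (ENNReal.rpow_le_rpow (setLIntegral_le_lintegral _ _) (by linarith))
            (ENNReal.rpow_le_rpow hwint hη0.le)
  -- scalar identities
  set e1 : ℝ := (1-η)*(1-θ) with he1_def
  set e2 : ℝ := (1-η)*θ with he2_def
  clear_value p θ γ V T1 v0 t1 f w A B a b ρ s e1 e2
  have hkeyρ : ∀ r : ℝ, ρ ^ r = Real.exp ((Real.log b - Real.log a) * ((1/(2*α)) * r)) := by
    intro r
    have hba : (0:ℝ) < b/a := div_pos hb0 ha0
    rw [hρ_def, ← Real.rpow_mul hba.le, Real.rpow_def_of_pos hba,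
      Real.log_div hb0.ne' ha0.ne']
  have hscal1 : a^((1:ℝ)-η) * ((ρ^((d:ℝ)))^η) = a^e1 * b^e2 := by
    rw [← Real.rpow_mul hρ0.le, hkeyρ, Real.rpow_def_of_pos ha0,
      Real.rpow_def_of_pos ha0, Real.rpow_def_of_pos hb0, ← Real.exp_add, ← Real.exp_add]
    congr 1
    rw [he1_def, he2_def, hθ_def]
    field_simp
    ring
  have hscal2 : b^((1:ℝ)-η) * ((ρ^((d:ℝ)-γ))^η) = a^e1 * b^e2 := by
    rw [← Real.rpow_mul hρ0.le, hkeyρ, Real.rpow_def_of_pos hb0,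
      Real.rpow_def_of_pos ha0, Real.rpow_def_of_pos hb0, ← Real.exp_add, ← Real.exp_add]
    congr 1
    rw [he1_def, he2_def, hθ_def, hγ_def]
    field_simp
    ring
  have hterm1 : A ^ ((1:ℝ)-η) * (ENNReal.ofReal (ρ^d) * V) ^ η
      = ENNReal.ofReal (v0^η * (a^e1 * b^e2)) := by
    rw [hA_eq, hV_eq, ← ENNReal.ofReal_mul (by positivity : (0:ℝ) ≤ ρ^d),
      ENNReal.ofReal_rpow_of_pos ha0, ENNReal.ofReal_rpow_of_pos (by positivity),
      ← ENNReal.ofReal_mul (by positivity)]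
    congr 1
    rw [Real.mul_rpow (by positivity) hv0.le, ← Real.rpow_natCast ρ d]
    rw [show a ^ ((1:ℝ)-η) * ((ρ^((d:ℝ)))^η * v0^η) = (a^((1:ℝ)-η) * ((ρ^((d:ℝ)))^η)) * v0^η by ring,
      hscal1]
    ring
  have hterm2 : B ^ ((1:ℝ)-η) * (ENNReal.ofReal (ρ ^ ((d:ℝ)-γ)) * T1) ^ η
      = ENNReal.ofReal (t1^η * (a^e1 * b^e2)) := by
    rw [hB_eq, hT1_eq, ← ENNReal.ofReal_mul (by positivity : (0:ℝ) ≤ ρ^((d:ℝ)-γ)),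
      ENNReal.ofReal_rpow_of_pos hb0,
      ENNReal.ofReal_rpow_of_nonneg (by positivity) hη0.le,
      ← ENNReal.ofReal_mul (by positivity)]
    congr 1
    rw [Real.mul_rpow (by positivity) ht1]
    rw [show b ^ ((1:ℝ)-η) * ((ρ^((d:ℝ)-γ))^η * t1^η) = (b^((1:ℝ)-η) * ((ρ^((d:ℝ)-γ))^η)) * t1^η by ring,
      hscal2]
    ring
  have hI : ∫⁻ x, f x ^ p ∂(volume : Measure E)
      ≤ ENNReal.ofReal ((v0^η + t1^η) * (a^e1 * b^e2)) := by
    calc ∫⁻ x, f x ^ p ∂(volume : Measure E)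
        = (∫⁻ x in s, f x ^ p ∂(volume : Measure E))
          + ∫⁻ x in sᶜ, f x ^ p ∂(volume : Measure E) :=
          (lintegral_add_compl _ hs).symm
      _ ≤ ENNReal.ofReal (v0^η * (a^e1 * b^e2)) + ENNReal.ofReal (t1^η * (a^e1 * b^e2)) := by
          rw [← hterm1, ← hterm2]; exact add_le_add hball htail
      _ = ENNReal.ofReal ((v0^η + t1^η) * (a^e1 * b^e2)) := by
          rw [← ENNReal.ofReal_add (by positivity) (by positivity)]; ring_nf
  -- conclude
  have hZpos : (0:ℝ) < a^e1 * b^e2 := by positivity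
  have hfinal1 : (ENNReal.ofReal ((v0^η + t1^η) * (a^e1 * b^e2))) ^ ((1:ℝ)/p)
      = ENNReal.ofReal ((v0^η + t1^η)^((1:ℝ)/p)) * (A^((1:ℝ)/2))^(1-θ) * (B^((1:ℝ)/2))^θ := by
    have hsum : (0:ℝ) < v0^η + t1^η := by positivity
    rw [ENNReal.ofReal_rpow_of_pos (by positivity),
      Real.mul_rpow hsum.le hZpos.le, Real.mul_rpow (by positivity) (by positivity),
      ← Real.rpow_mul ha0.le, ← Real.rpow_mul hb0.le]
    rw [← ENNReal.rpow_mul, ← ENNReal.rpow_mul, hA_eq, hB_eq,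
      ENNReal.ofReal_rpow_of_pos ha0, ENNReal.ofReal_rpow_of_pos hb0]
    have h2η : ((2:ℝ)-2*η) ≠ 0 := by intro h; rw [hp_def] at hp0; linarith
    rw [show e1 * ((1:ℝ)/p) = 1/2 * (1-θ) by
        rw [he1_def, hp_def, mul_one_div, div_eq_iff h2η]; ring,
      show e2 * ((1:ℝ)/p) = 1/2 * θ by
        rw [he2_def, hp_def, mul_one_div, div_eq_iff h2η]; ring]
    rw [ENNReal.ofReal_mul (by positivity), ENNReal.ofReal_mul (by positivity)]
    ring
  rw [heP, heA, heB]
  calc (∫⁻ x, f x ^ p ∂(volume : Measure E)) ^ ((1:ℝ)/p)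
      ≤ (ENNReal.ofReal ((v0^η + t1^η) * (a^e1 * b^e2))) ^ ((1:ℝ)/p) :=
        ENNReal.rpow_le_rpow hI (by positivity)
    _ = ENNReal.ofReal ((v0^η + t1^η)^((1:ℝ)/p)) * (A^((1:ℝ)/2))^(1-θ) * (B^((1:ℝ)/2))^θ :=
        hfinal1
    _ ≤ ENNReal.ofReal ((v0^η + t1^η)^((1:ℝ)/p) + 1) * (A^((1:ℝ)/2))^(1-θ) * (B^((1:ℝ)/2))^θ := by
        gcongr
        linarith
end

section
/- Let ε ∈ (0,1). Then for all complex numbers x₁, x₂ ∈ ℂ, |Im[(log(ε+|x₁|²)·x₁ − log(ε+|x₂|²)·x₂)·(conj(x₁) − conj(x₂))]| ≤ 4·|x₁ − x₂|². -/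
/-!
Since the coefficients `Lᵢ = log (ε + |xᵢ|²)` are real and `xᵢ · conj xᵢ` is real, the imaginary
part equals `(L₂ - L₁) · Im (x₁ · conj x₂)`. Assume `|x₂| ≤ |x₁|`. Then
`Im (x₁ · conj x₂) = Im ((x₁ - x₂) · conj x₂)` is at most `|x₁ - x₂| · |x₂|`, while adding `ε ≥ 0`
to numerator and denominator only decreases `|x₁|² / |x₂|²`, so
`L₁ - L₂ ≤ 2 log (|x₁| / |x₂|) ≤ 2 (|x₁| - |x₂|) / |x₂|`. The factors `|x₂|` cancel, leaving
`2 (|x₁| - |x₂|) · |x₁ - x₂| ≤ 2 |x₁ - x₂|²`.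
-/

open Complex ComplexConjugate

lemma im_ofReal_mul_sub_ofReal_mul_mul_conj_sub (a b : ℝ) (z w : ℂ) :
    (((a : ℂ) * z - (b : ℂ) * w) * (conj z - conj w)).im = (b - a) * (z * conj w).im := by
  simp only [sub_im, mul_im, sub_re, mul_re, conj_re, conj_im, ofReal_re, ofReal_im]
  ring

lemma abs_im_mul_conj_le (z w : ℂ) : |(z * conj w).im| ≤ ‖z - w‖ * ‖w‖ := by
  have h : (z * conj w).im = ((z - w) * conj w).im := by
    simp [sub_mul, mul_conj]
  calc |(z * conj w).im| = |((z - w) * conj w).im| := by rw [h]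
    _ ≤ ‖(z - w) * conj w‖ := abs_im_le_norm _
    _ = ‖z - w‖ * ‖w‖ := by rw [norm_mul, norm_conj]

lemma Real.mul_log_add_sq_sub_log_add_sq_le {ε s t : ℝ} (hε : 0 ≤ ε) (hs : 0 ≤ s) (hst : s ≤ t) :
    s * (Real.log (ε + t ^ 2) - Real.log (ε + s ^ 2)) ≤ 2 * (t - s) := by
  rcases hs.eq_or_lt with rfl | hs
  · linarith
  have ht : 0 < t := hs.trans_le hst
  have hεs : 0 < ε + s ^ 2 := by positivity
  have hratio : (ε + t ^ 2) / (ε + s ^ 2) ≤ (t / s) ^ 2 := by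
    rw [div_pow, div_le_div_iff₀ hεs (by positivity)]
    nlinarith [mul_le_mul_of_nonneg_left (pow_le_pow_left₀ hs.le hst 2) hε]
  have hlog : Real.log (ε + t ^ 2) - Real.log (ε + s ^ 2) ≤ 2 * ((t - s) / s) :=
    calc Real.log (ε + t ^ 2) - Real.log (ε + s ^ 2)
        = Real.log ((ε + t ^ 2) / (ε + s ^ 2)) := (Real.log_div (by positivity) hεs.ne').symm
      _ ≤ Real.log ((t / s) ^ 2) := Real.log_le_log (by positivity) hratio
      _ = 2 * Real.log (t / s) := by rw [Real.log_pow]; norm_num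
      _ ≤ 2 * (t / s - 1) := by
        gcongr; exact Real.log_le_sub_one_of_pos (by positivity)
      _ = 2 * ((t - s) / s) := by field_simp
  calc s * (Real.log (ε + t ^ 2) - Real.log (ε + s ^ 2)) ≤ s * (2 * ((t - s) / s)) := by gcongr
    _ = 2 * (t - s) := by field_simp

lemma abs_log_add_norm_sq_sub_mul_abs_im_le {ε : ℝ} (hε : 0 < ε) (z w : ℂ) :
    |Real.log (ε + ‖z‖ ^ 2) - Real.log (ε + ‖w‖ ^ 2)| * |(z * conj w).im| ≤ 2 * ‖z - w‖ ^ 2 := by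
  wlog h : ‖w‖ ≤ ‖z‖ generalizing z w
  · have := this w z (le_of_not_ge h)
    have him : (w * conj z).im = -(z * conj w).im := by
      simp only [mul_im, conj_re, conj_im]; ring
    rwa [abs_sub_comm, norm_sub_rev, him, abs_neg] at this
  have hlog_mono : Real.log (ε + ‖w‖ ^ 2) ≤ Real.log (ε + ‖z‖ ^ 2) := by
    gcongr
  have hnorm : ‖z‖ - ‖w‖ ≤ ‖z - w‖ := norm_sub_norm_le z w
  calc |Real.log (ε + ‖z‖ ^ 2) - Real.log (ε + ‖w‖ ^ 2)| * |(z * conj w).im|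
      ≤ (Real.log (ε + ‖z‖ ^ 2) - Real.log (ε + ‖w‖ ^ 2)) * (‖z - w‖ * ‖w‖) := by
        rw [abs_of_nonneg (sub_nonneg.2 hlog_mono)]
        gcongr
        exact abs_im_mul_conj_le z w
    _ = ‖z - w‖ * (‖w‖ * (Real.log (ε + ‖z‖ ^ 2) - Real.log (ε + ‖w‖ ^ 2))) := by ring
    _ ≤ ‖z - w‖ * (2 * (‖z‖ - ‖w‖)) :=
        mul_le_mul_of_nonneg_left
          (Real.mul_log_add_sq_sub_log_add_sq_le hε.le (norm_nonneg w) h) (norm_nonneg _)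
    _ ≤ 2 * ‖z - w‖ ^ 2 := by nlinarith [norm_nonneg (z - w)]

/-- For `ε ∈ (0,1)` and all `x₁ x₂ ∈ ℂ`,
`|Im[(log(ε+|x₁|²)x₁ − log(ε+|x₂|²)x₂)(conj x₁ − conj x₂)]| ≤ 4|x₁ − x₂|²`. -/
theorem stmt_1 (ε : ℝ) (hε : ε ∈ Set.Ioo (0:ℝ) 1) (x₁ x₂ : ℂ) :
    |(((Real.log (ε + ‖x₁‖ ^ 2) : ℂ) * x₁ -
        (Real.log (ε + ‖x₂‖ ^ 2) : ℂ) * x₂) *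
       (starRingEnd ℂ x₁ - starRingEnd ℂ x₂)).im| ≤
      4 * ‖x₁ - x₂‖ ^ 2 := by
  rw [im_ofReal_mul_sub_ofReal_mul_mul_conj_sub, abs_mul, abs_sub_comm]
  calc _ ≤ 2 * ‖x₁ - x₂‖ ^ 2 := abs_log_add_norm_sq_sub_mul_abs_im_le hε.1 x₁ x₂
    _ ≤ 4 * ‖x₁ - x₂‖ ^ 2 := by gcongr; norm_num
end

section
/- Let ε ∈ (0,1). Then for all complex numbers x₁, x₂ ∈ ℂ, |Im[(f_ε(|x₁|²)·x₁ − f_ε(|x₂|²)·x₂)·(conj(x₁) − conj(x₂))]| ≤ 4(1−ε²)·|x₁ − x₂|², where f_ε(r) = log((r+ε)/(1+εr)). -/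
private lemma lem_log (y : ℝ) (hy : 1 ≤ y) : 2 * Real.log y ≤ y - y⁻¹ := by
  have hmono : MonotoneOn (fun y : ℝ => y - y⁻¹ - 2 * Real.log y) (Set.Ici 1) := by
    apply monotoneOn_of_deriv_nonneg (convex_Ici 1)
    · apply ContinuousOn.sub
      · apply ContinuousOn.sub continuousOn_id
        exact ContinuousOn.inv₀ continuousOn_id (fun x hx => by
          have h1 : (1:ℝ) ≤ x := hx; intro h0; rw [h0] at h1; linarith)
      · refine ContinuousOn.mul continuousOn_const (Real.continuousOn_log.mono ?_)
        intro x hx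
        simp only [Set.mem_Ici] at hx
        simp only [Set.mem_compl_iff, Set.mem_singleton_iff]
        intro h0; rw [h0] at hx; linarith
    · intro x hx
      rw [interior_Ici] at hx
      have hx0 : (0:ℝ) < x := lt_trans one_pos hx
      exact (((hasDerivAt_id x).sub (hasDerivAt_inv hx0.ne')).sub
        ((Real.hasDerivAt_log hx0.ne').const_mul 2)).differentiableAt.differentiableWithinAt
    · intro x hx
      rw [interior_Ici] at hx
      have hx0 : (0:ℝ) < x := lt_trans one_pos hx
      have hd : HasDerivAt (fun y : ℝ => y - y⁻¹ - 2 * Real.log y)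
          (1 - (-(x^2)⁻¹) - 2 * x⁻¹) x :=
        ((hasDerivAt_id x).sub (hasDerivAt_inv hx0.ne')).sub
          ((Real.hasDerivAt_log hx0.ne').const_mul 2)
      rw [hd.deriv]
      have heq : 1 - (-(x^2)⁻¹) - 2 * x⁻¹ = (x-1)^2 / x^2 := by
        field_simp; ring
      rw [heq]; positivity
  have h1 := hmono (Set.mem_Ici.2 le_rfl) (Set.mem_Ici.2 hy) hy
  simp only [Real.log_one] at h1
  norm_num at h1
  linarith

private lemma lem_logdiv (A B c : ℝ) (hB : 0 < B) (hBA : B ≤ A) (hc : 0 < c)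
    (hcAB : c^2 ≤ A * B) : Real.log A - Real.log B ≤ (A - B) / c := by
  have hA : 0 < A := lt_of_lt_of_le hB hBA
  have hsA : 0 < Real.sqrt A := Real.sqrt_pos.2 hA
  have hsB : 0 < Real.sqrt B := Real.sqrt_pos.2 hB
  have hA2 : Real.sqrt A ^ 2 = A := Real.sq_sqrt hA.le
  have hB2 : Real.sqrt B ^ 2 = B := Real.sq_sqrt hB.le
  have hy : 1 ≤ Real.sqrt A / Real.sqrt B :=
    (one_le_div hsB).2 (Real.sqrt_le_sqrt hBA)
  have h1 := lem_log (Real.sqrt A / Real.sqrt B) hy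
  have hlog : Real.log A - Real.log B = 2 * Real.log (Real.sqrt A / Real.sqrt B) := by
    rw [Real.log_div hsA.ne' hsB.ne', Real.log_sqrt hA.le, Real.log_sqrt hB.le]; ring
  have heq : Real.sqrt A / Real.sqrt B - (Real.sqrt A / Real.sqrt B)⁻¹
      = (A - B) / (Real.sqrt A * Real.sqrt B) := by
    rw [inv_div, div_sub_div _ _ hsB.ne' hsA.ne', div_eq_div_iff (by positivity) (by positivity),
      Real.mul_self_sqrt hA.le, Real.mul_self_sqrt hB.le]
    ring
  have h2 : Real.log A - Real.log B ≤ (A - B) / (Real.sqrt A * Real.sqrt B) := by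
    rw [hlog, ← heq]; exact h1
  have hcs : c ≤ Real.sqrt A * Real.sqrt B := by
    rw [← Real.sqrt_mul hA.le]
    exact (Real.le_sqrt hc.le (mul_nonneg hA.le hB.le)).2 hcAB
  calc Real.log A - Real.log B ≤ (A - B) / (Real.sqrt A * Real.sqrt B) := h2
    _ ≤ (A - B) / c := by
        apply div_le_div_of_nonneg_left (by linarith) hc hcs

/-- Monotonicity of `f_ε`. -/
private lemma f_mono (ε : ℝ) (hε0 : 0 < ε) (hε1 : ε < 1) {s r : ℝ} (hs : 0 ≤ s)
    (hsr : s ≤ r) :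
    Real.log ((s + ε) / (1 + ε * s)) ≤ Real.log ((r + ε) / (1 + ε * r)) := by
  have hr : 0 ≤ r := le_trans hs hsr
  have h1 : (0:ℝ) < 1 + ε * s := by positivity
  have h2 : (0:ℝ) < 1 + ε * r := by positivity
  have hε2 : ε^2 < 1 := by nlinarith
  apply Real.log_le_log (by positivity)
  rw [div_le_div_iff₀ h1 h2]
  nlinarith [mul_nonneg (sub_nonneg.2 hsr) (le_of_lt (sub_pos.2 hε2))]

/-- Key quantitative bound. -/
private lemma f_diff_bound (ε a b : ℝ) (hε0 : 0 < ε) (hε1 : ε < 1) (hb : 0 ≤ b)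
    (hba : b ≤ a) :
    (Real.log ((a^2 + ε) / (1 + ε * a^2)) - Real.log ((b^2 + ε) / (1 + ε * b^2))) * b
      ≤ 2 * (1 - ε^2) * (a - b) := by
  have ha : 0 ≤ a := le_trans hb hba
  have hε2 : ε^2 < 1 := by nlinarith
  rcases eq_or_lt_of_le hb with hb0 | hb0
  · rw [← hb0]
    simp
    have : 0 ≤ 2 * (1 - ε^2) * a := by
      apply mul_nonneg (by linarith) ha
    linarith
  · have ha0 : 0 < a := lt_of_lt_of_le hb0 hba
    have hd1 : (0:ℝ) < 1 + ε * a^2 := by positivity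
    have hd2 : (0:ℝ) < 1 + ε * b^2 := by positivity
    have hn1 : (0:ℝ) < a^2 + ε := by positivity
    have hn2 : (0:ℝ) < b^2 + ε := by positivity
    set A := (a^2 + ε) * (1 + ε * b^2) with hA
    set B := (b^2 + ε) * (1 + ε * a^2) with hB
    have hApos : 0 < A := by positivity
    have hBpos : 0 < B := by positivity
    have hAB : A - B = (a^2 - b^2) * (1 - ε^2) := by rw [hA, hB]; ring
    have hab2 : b^2 ≤ a^2 := by nlinarith
    have hBA : B ≤ A := by
      have := mul_nonneg (sub_nonneg.2 hab2) (le_of_lt (sub_pos.2 hε2))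
      linarith [hAB]
    have hrw : Real.log ((a^2 + ε) / (1 + ε * a^2)) - Real.log ((b^2 + ε) / (1 + ε * b^2))
        = Real.log A - Real.log B := by
      rw [hA, hB, Real.log_div hn1.ne' hd1.ne', Real.log_div hn2.ne' hd2.ne',
        Real.log_mul hn1.ne' hd2.ne', Real.log_mul hn2.ne' hd1.ne']
      ring
    have hab : (0:ℝ) < a * b := by positivity
    have hc2 : (a * b)^2 ≤ A * B := by
      have h1 : a^2 ≤ A := by rw [hA]; nlinarith [sq_nonneg (a*b), sq_nonneg a, sq_nonneg b]
      have h2 : b^2 ≤ B := by rw [hB]; nlinarith [sq_nonneg (a*b), sq_nonneg a, sq_nonneg b]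
      calc (a * b)^2 = a^2 * b^2 := by ring
        _ ≤ A * B := mul_le_mul h1 h2 (sq_nonneg b) hApos.le
    have hkey := lem_logdiv A B (a * b) hBpos hBA hab hc2
    rw [hrw]
    have h3 : (A - B) / (a * b) * b ≤ 2 * (1 - ε^2) * (a - b) := by
      rw [hAB, div_mul_eq_mul_div, div_le_iff₀ hab]
      nlinarith [mul_nonneg (mul_nonneg (by linarith : (0:ℝ) ≤ 1 - ε^2) hb) (sq_nonneg (a-b))]
    calc (Real.log A - Real.log B) * b ≤ (A - B) / (a * b) * b :=
          mul_le_mul_of_nonneg_right hkey hb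
      _ ≤ 2 * (1 - ε^2) * (a - b) := h3

private lemma aux_main (ε : ℝ) (hε : ε ∈ Set.Ioo (0:ℝ) 1) (x₁ x₂ : ℂ)
    (hle : ‖x₂‖ ≤ ‖x₁‖) :
    |(((Real.log ((‖x₁‖ ^ 2 + ε) / (1 + ε * ‖x₁‖ ^ 2)) : ℂ) * x₁ -
        (Real.log ((‖x₂‖ ^ 2 + ε) / (1 + ε * ‖x₂‖ ^ 2)) : ℂ) * x₂) *
       (starRingEnd ℂ x₁ - starRingEnd ℂ x₂)).im| ≤
      4 * (1 - ε ^ 2) * ‖x₁ - x₂‖ ^ 2 := by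
  obtain ⟨hε0, hε1⟩ := hε
  have hε2 : ε^2 < 1 := by nlinarith
  set a := ‖x₁‖ with ha
  set b := ‖x₂‖ with hb
  set L₁ := Real.log ((a ^ 2 + ε) / (1 + ε * a ^ 2)) with hL₁
  set L₂ := Real.log ((b ^ 2 + ε) / (1 + ε * b ^ 2)) with hL₂
  have hbnn : 0 ≤ b := norm_nonneg _
  have hb2a2 : b^2 ≤ a^2 := by nlinarith [norm_nonneg x₁]
  have hL : L₂ ≤ L₁ := f_mono ε hε0 hε1 (by positivity) hb2a2
  have him : (((L₁ : ℂ) * x₁ - (L₂ : ℂ) * x₂) * (starRingEnd ℂ x₁ - starRingEnd ℂ x₂)).im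
      = (L₂ - L₁) * (x₁ * starRingEnd ℂ x₂).im := by
    simp [Complex.mul_im, Complex.mul_re, Complex.sub_im, Complex.sub_re]
    ring
  rw [him, abs_mul]
  have him2 : (x₁ * starRingEnd ℂ x₂).im = ((x₁ - x₂) * starRingEnd ℂ x₂).im := by
    simp [Complex.mul_im, Complex.sub_im, Complex.sub_re]
    ring
  have hbound : |(x₁ * starRingEnd ℂ x₂).im| ≤ ‖x₁ - x₂‖ * b := by
    rw [him2]
    calc |((x₁ - x₂) * starRingEnd ℂ x₂).im| ≤ ‖(x₁ - x₂) * starRingEnd ℂ x₂‖ :=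
          Complex.abs_im_le_norm _
      _ = ‖x₁ - x₂‖ * b := by rw [norm_mul, Complex.norm_conj]
  have hdiff : a - b ≤ ‖x₁ - x₂‖ := by
    have := norm_sub_norm_le x₁ x₂
    simpa using this
  have hLabs : |L₂ - L₁| = L₁ - L₂ := by rw [abs_sub_comm]; exact abs_of_nonneg (by linarith)
  rw [hLabs]
  have hkey : (L₁ - L₂) * b ≤ 2 * (1 - ε^2) * (a - b) := f_diff_bound ε a b hε0 hε1 hbnn hle
  have hdnn : 0 ≤ ‖x₁ - x₂‖ := norm_nonneg _
  have hLL : 0 ≤ L₁ - L₂ := by linarith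
  calc (L₁ - L₂) * |(x₁ * starRingEnd ℂ x₂).im|
      ≤ (L₁ - L₂) * (‖x₁ - x₂‖ * b) := mul_le_mul_of_nonneg_left hbound hLL
    _ = ((L₁ - L₂) * b) * ‖x₁ - x₂‖ := by ring
    _ ≤ (2 * (1 - ε^2) * (a - b)) * ‖x₁ - x₂‖ :=
        mul_le_mul_of_nonneg_right hkey hdnn
    _ ≤ (2 * (1 - ε^2) * ‖x₁ - x₂‖) * ‖x₁ - x₂‖ := by
        apply mul_le_mul_of_nonneg_right _ hdnn
        apply mul_le_mul_of_nonneg_left hdiff (by linarith)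
    _ ≤ 4 * (1 - ε ^ 2) * ‖x₁ - x₂‖ ^ 2 := by
        nlinarith [mul_nonneg (by linarith : (0:ℝ) ≤ 1 - ε^2) (sq_nonneg (‖x₁ - x₂‖))]

/-- For `ε ∈ (0,1)` and all `x₁ x₂ ∈ ℂ`, with `f_ε(r) = log((r+ε)/(1+εr))`,
`|Im[(f_ε(|x₁|²)x₁ − f_ε(|x₂|²)x₂)(conj x₁ − conj x₂)]| ≤ 4(1−ε²)|x₁ − x₂|²`. -/
theorem stmt_4 (ε : ℝ) (hε : ε ∈ Set.Ioo (0:ℝ) 1) (x₁ x₂ : ℂ) :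
    |(((Real.log ((‖x₁‖ ^ 2 + ε) / (1 + ε * ‖x₁‖ ^ 2)) : ℂ) * x₁ -
        (Real.log ((‖x₂‖ ^ 2 + ε) / (1 + ε * ‖x₂‖ ^ 2)) : ℂ) * x₂) *
       (starRingEnd ℂ x₁ - starRingEnd ℂ x₂)).im| ≤
      4 * (1 - ε ^ 2) * ‖x₁ - x₂‖ ^ 2 := by
  rcases le_total (‖x₂‖) (‖x₁‖) with h | h
  · exact aux_main ε hε x₁ x₂ h
  · have h2 := aux_main ε hε x₂ x₁ h
    rw [show (((Real.log ((‖x₁‖ ^ 2 + ε) / (1 + ε * ‖x₁‖ ^ 2)) : ℂ) * x₁ -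
        (Real.log ((‖x₂‖ ^ 2 + ε) / (1 + ε * ‖x₂‖ ^ 2)) : ℂ) * x₂) *
       (starRingEnd ℂ x₁ - starRingEnd ℂ x₂))
       = (((Real.log ((‖x₂‖ ^ 2 + ε) / (1 + ε * ‖x₂‖ ^ 2)) : ℂ) * x₂ -
        (Real.log ((‖x₁‖ ^ 2 + ε) / (1 + ε * ‖x₁‖ ^ 2)) : ℂ) * x₁) *
       (starRingEnd ℂ x₂ - starRingEnd ℂ x₁)) from by ring,
       norm_sub_rev x₁ x₂]
    exact h2
end

section
/- For all complex numbers x₁, x₂ ∈ ℂ, |Im(conj(x₁)·x₂ − conj(x₂)·x₁)| ≤ 2·min(|x₁|, |x₂|)·|x₁ − x₂|. -/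
open ComplexConjugate

namespace Complex

/-- `conj a * a` is real, so replacing `b` by `b - a` does not change the imaginary part. -/
lemma im_conj_mul_sub_conj_mul_eq (a b : ℂ) :
    (conj a * b - conj b * a).im = 2 * (conj a * (b - a)).im := by
  simp only [sub_im, mul_im, conj_re, conj_im, sub_re]
  ring

lemma abs_im_conj_mul_sub_conj_mul_le (a b : ℂ) :
    |(conj a * b - conj b * a).im| ≤ 2 * ‖a‖ * ‖a - b‖ := by
  rw [im_conj_mul_sub_conj_mul_eq, abs_mul, abs_two, mul_assoc]
  gcongr
  calc |(conj a * (b - a)).im| ≤ ‖conj a * (b - a)‖ := abs_im_le_norm _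
    _ = ‖a‖ * ‖a - b‖ := by rw [norm_mul, norm_conj, norm_sub_rev]

lemma abs_im_conj_mul_sub_conj_mul_comm (a b : ℂ) :
    |(conj a * b - conj b * a).im| = |(conj b * a - conj a * b).im| := by
  rw [← neg_sub, neg_im, abs_neg]

end Complex

/-- For all `x₁ x₂ ∈ ℂ`, `|Im(conj(x₁)x₂ − conj(x₂)x₁)| ≤ 2 min(|x₁|,|x₂|)|x₁ − x₂|`. -/
theorem stmt_5 (x₁ x₂ : ℂ) :
    |(starRingEnd ℂ x₁ * x₂ - starRingEnd ℂ x₂ * x₁).im| ≤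
      2 * min ‖x₁‖ ‖x₂‖ * ‖x₁ - x₂‖ := by
  rcases le_total ‖x₁‖ ‖x₂‖ with h | h
  · rw [min_eq_left h]
    exact Complex.abs_im_conj_mul_sub_conj_mul_le x₁ x₂
  · rw [min_eq_right h, Complex.abs_im_conj_mul_sub_conj_mul_comm, norm_sub_rev]
    exact Complex.abs_im_conj_mul_sub_conj_mul_le x₂ x₁
end

section
/- Let η, η' ∈ (0,1]. There exists a constant C > 0 (depending only on η and η') such that for every ε ∈ (0,1) and every r > 0, (log((r+ε)/(1+εr)) − log r)² · r ≤ C·(ε^{η'}·r^{1+η'} + ε^{η}·r^{1−η}). -/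
/-!
Since `f_ε(r) - log r = log (1 + ε / r) - log (1 + ε r)` is a difference of two nonnegative
numbers, its square is at most `log (1 + ε / r) ^ 2 + log (1 + ε r) ^ 2`. Both terms are
controlled by `log (1 + x) ≤ (2 / α) x ^ (α / 2)`, which follows from
`log y ≤ (y ^ β - 1) / β` and the subadditivity `(1 + x) ^ β ≤ 1 + x ^ β` for `β ≤ 1`;
taking `α = η` for `x = ε / r` and `α = η'` for `x = ε r` gives the two terms of the bound.
-/

open Real

namespace Real

lemma log_le_rpow_sub_one_div {y β : ℝ} (hy : 0 < y) (hβ : 0 < β) :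
    log y ≤ (y ^ β - 1) / β := by
  have h := log_le_sub_one_of_pos (rpow_pos_of_pos hy β)
  rw [log_rpow hy] at h
  rw [le_div_iff₀ hβ]
  linarith

lemma log_one_add_le_rpow_div {x β : ℝ} (hx : 0 ≤ x) (hβ : 0 < β) (hβ1 : β ≤ 1) :
    log (1 + x) ≤ x ^ β / β := by
  calc log (1 + x) ≤ ((1 + x) ^ β - 1) / β := log_le_rpow_sub_one_div (by linarith) hβ
    _ ≤ (1 ^ β + x ^ β - 1) / β := by
      gcongr
      exact rpow_add_le_add_rpow zero_le_one hx hβ.le hβ1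
    _ = x ^ β / β := by rw [one_rpow, add_sub_cancel_left]

lemma log_one_add_sq_le_rpow {x α : ℝ} (hx : 0 ≤ x) (hα : 0 < α) (hα2 : α ≤ 2) :
    log (1 + x) ^ 2 ≤ (2 / α) ^ 2 * x ^ α := by
  have hlog := log_one_add_le_rpow_div hx (half_pos hα) (by linarith)
  calc log (1 + x) ^ 2 ≤ (x ^ (α / 2) / (α / 2)) ^ 2 := by
        gcongr
        exact log_nonneg (by linarith)
    _ = (2 / α) ^ 2 * x ^ α := by
      rw [div_pow, ← rpow_natCast (x ^ (α / 2)), ← rpow_mul hx]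
      field_simp
      norm_num

lemma log_one_add_div_sq_mul_le {ε r α : ℝ} (hε : 0 ≤ ε) (hr : 0 < r) (hα : 0 < α)
    (hα2 : α ≤ 2) :
    log (1 + ε / r) ^ 2 * r ≤ (2 / α) ^ 2 * (ε ^ α * r ^ (1 - α)) := by
  calc log (1 + ε / r) ^ 2 * r ≤ (2 / α) ^ 2 * (ε / r) ^ α * r := by
        gcongr
        exact log_one_add_sq_le_rpow (by positivity) hα hα2
    _ = (2 / α) ^ 2 * (ε ^ α * r ^ (1 - α)) := by
        rw [div_rpow hε hr.le, rpow_sub hr, rpow_one]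
        ring

lemma log_one_add_mul_sq_mul_le {ε r α : ℝ} (hε : 0 ≤ ε) (hr : 0 < r) (hα : 0 < α)
    (hα2 : α ≤ 2) :
    log (1 + ε * r) ^ 2 * r ≤ (2 / α) ^ 2 * (ε ^ α * r ^ (1 + α)) := by
  calc log (1 + ε * r) ^ 2 * r ≤ (2 / α) ^ 2 * (ε * r) ^ α * r := by
        gcongr
        exact log_one_add_sq_le_rpow (by positivity) hα hα2
    _ = (2 / α) ^ 2 * (ε ^ α * r ^ (1 + α)) := by
        rw [mul_rpow hε hr.le, rpow_add hr, rpow_one]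
        ring

lemma log_div_one_add_mul_sub_log {ε r : ℝ} (hε : 0 ≤ ε) (hr : 0 < r) :
    log ((r + ε) / (1 + ε * r)) - log r = log (1 + ε / r) - log (1 + ε * r) := by
  have hrε : 1 + ε / r = (r + ε) / r := by field_simp
  rw [hrε, log_div (by positivity) (by positivity), log_div (by positivity) hr.ne']
  ring

end Real

/-- For `η, η' ∈ (0,1]` there is `C > 0` such that for every `ε ∈ (0,1)` and `r > 0`,
`(log((r+ε)/(1+εr)) − log r)² r ≤ C(ε^{η'} r^{1+η'} + ε^{η} r^{1−η})`. -/
theorem stmt_8 (η η' : ℝ) (hη : η ∈ Set.Ioc (0:ℝ) 1) (hη' : η' ∈ Set.Ioc (0:ℝ) 1) :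
    ∃ C : ℝ, 0 < C ∧ ∀ ε ∈ Set.Ioo (0:ℝ) 1, ∀ r : ℝ, 0 < r →
      (Real.log ((r + ε) / (1 + ε * r)) - Real.log r) ^ 2 * r ≤
        C * (ε ^ η' * r ^ (1 + η') + ε ^ η * r ^ (1 - η)) := by
  obtain ⟨hη0, hη1⟩ := hη
  obtain ⟨hη'0, hη'1⟩ := hη'
  refine ⟨(2 / η) ^ 2 + (2 / η') ^ 2, by positivity, ?_⟩
  rintro ε ⟨hε, -⟩ r hr
  have hA := log_one_add_div_sq_mul_le hε.le hr hη0 (by linarith)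
  have hB := log_one_add_mul_sq_mul_le hε.le hr hη'0 (by linarith)
  have ha : 0 ≤ log (1 + ε / r) := log_nonneg (le_add_of_nonneg_right (by positivity))
  have hb : 0 ≤ log (1 + ε * r) := log_nonneg (le_add_of_nonneg_right (by positivity))
  have hcross : 0 ≤ (2 / η) ^ 2 * (ε ^ η' * r ^ (1 + η')) +
      (2 / η') ^ 2 * (ε ^ η * r ^ (1 - η)) := by positivity
  rw [log_div_one_add_mul_sub_log hε.le hr]
  nlinarith [mul_nonneg (mul_nonneg ha hb) hr.le]
end

section
/- Let 0 < ε' ≤ ε < 1. Then for every r ≥ 0, |log((r+ε)/(1+εr)) − log((r+ε')/(1+ε'r))| ≤ (ε − ε')·(1/(r+ε') + r). -/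
/-- For `0 < ε' ≤ ε < 1` and every `r ≥ 0`,
`|log((r+ε)/(1+εr)) − log((r+ε')/(1+ε'r))| ≤ (ε − ε')(1/(r+ε') + r)`. -/
theorem stmt_9 (ε ε' : ℝ) (hε' : 0 < ε') (hεε' : ε' ≤ ε) (hε : ε < 1)
    (r : ℝ) (hr : 0 ≤ r) :
    |Real.log ((r + ε) / (1 + ε * r)) - Real.log ((r + ε') / (1 + ε' * r))| ≤
      (ε - ε') * (1 / (r + ε') + r) := by
  have hεpos : (0:ℝ) < ε := lt_of_lt_of_le hε' hεε'
  have h1 : (0:ℝ) < r + ε' := by positivity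
  have h2 : (0:ℝ) < r + ε := by positivity
  have h3 : (0:ℝ) < 1 + ε' * r := by positivity
  have h4 : (0:ℝ) < 1 + ε * r := by positivity
  set A := Real.log (r + ε) - Real.log (r + ε') with hA
  set B := Real.log (1 + ε * r) - Real.log (1 + ε' * r) with hB
  have key : Real.log ((r + ε) / (1 + ε * r)) - Real.log ((r + ε') / (1 + ε' * r))
      = A - B := by
    rw [Real.log_div h2.ne' h4.ne', Real.log_div h1.ne' h3.ne']
    ring
  have hA0 : 0 ≤ A := sub_nonneg.mpr (Real.log_le_log h1 (by linarith))
  have hB0 : 0 ≤ B := sub_nonneg.mpr (Real.log_le_log h3 (by nlinarith))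
  have hAle : A ≤ (ε - ε') * (1 / (r + ε')) := by
    have := Real.log_le_sub_one_of_pos (div_pos h2 h1)
    rw [hA, ← Real.log_div h2.ne' h1.ne']
    calc Real.log ((r + ε) / (r + ε')) ≤ (r + ε) / (r + ε') - 1 := this
      _ = (ε - ε') * (1 / (r + ε')) := by field_simp; ring
  have hBle : B ≤ (ε - ε') * r := by
    have h5 := Real.log_le_sub_one_of_pos (div_pos h4 h3)
    rw [hB, ← Real.log_div h4.ne' h3.ne']
    calc Real.log ((1 + ε * r) / (1 + ε' * r)) ≤ (1 + ε * r) / (1 + ε' * r) - 1 := h5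
      _ = (ε - ε') * r / (1 + ε' * r) := by field_simp; ring
      _ ≤ (ε - ε') * r := by
          rw [div_le_iff₀ h3]
          nlinarith [mul_nonneg (mul_nonneg (sub_nonneg.mpr hεε') hr) (mul_nonneg hε'.le hr)]
  rw [key, abs_sub_le_iff]
  have hBnd : 0 ≤ (ε - ε') * r := mul_nonneg (by linarith) hr
  have hAnd : 0 ≤ (ε - ε') * (1 / (r + ε')) := mul_nonneg (by linarith) (by positivity)
  constructor <;> nlinarith
end

section
/- Let η ∈ (0,1]. There exists a constant C > 0 (depending only on η) such that for every ε ∈ (0,1) and every a ≥ 0, |(ε+a²)·log(ε+a²) − a² − ε·log ε| ≤ C·(a² + a^{2−2η} + a^{2+2η}). -/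
/-!
Writing `ρ = a²`, the quantity equals `ε (log (ε + ρ) - log ε) + ρ log (ε + ρ) - ρ`, and the
first term lies in `[0, ρ]` because `log` is increasing with `log y ≤ y - 1`. So everything
reduces to bounding `ρ |log (ε + ρ)|`, which follows from `|log x| ≤ (x ^ η + x ^ (-η)) / η`
together with `ρ ≤ ε + ρ ≤ 1 + ρ` and `(1 + ρ) ^ η ≤ 1 + ρ ^ η`.
-/

open Real

namespace Real

lemma abs_log_le_rpow_add_rpow_neg_div {x t : ℝ} (hx : 0 < x) (ht : 0 < t) :
    |log x| ≤ (x ^ t + x ^ (-t)) / t := by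
  have h_log : log x ≤ x ^ t / t := log_le_rpow_div hx.le ht
  have h_neg_log : -log x ≤ x ^ (-t) / t := by
    rw [← log_inv, rpow_neg hx.le, ← inv_rpow hx.le]
    exact log_le_rpow_div (inv_nonneg.2 hx.le) ht
  have h_pos : 0 ≤ x ^ t / t := by positivity
  have h_neg : 0 ≤ x ^ (-t) / t := by positivity
  rw [abs_le, add_div]
  constructor <;> linarith

lemma mul_abs_log_add_le {ε ρ η : ℝ} (hε : 0 ≤ ε) (hε1 : ε ≤ 1) (hρ : 0 ≤ ρ) (hη : 0 < η)
    (hη1 : η ≤ 1) :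
    ρ * |log (ε + ρ)| ≤ (ρ ^ (1 - η) + ρ + ρ ^ (1 + η)) / η := by
  rcases hρ.eq_or_lt with rfl | hρ
  · rw [zero_mul]
    positivity
  have hx : 0 < ε + ρ := by positivity
  have h_pos : (ε + ρ) ^ η ≤ 1 + ρ ^ η :=
    calc (ε + ρ) ^ η ≤ (1 + ρ) ^ η := by gcongr
      _ ≤ 1 ^ η + ρ ^ η := rpow_add_le_add_rpow zero_le_one hρ.le hη.le hη1
      _ = 1 + ρ ^ η := by rw [one_rpow]
  have h_neg : (ε + ρ) ^ (-η) ≤ ρ ^ (-η) :=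
    rpow_le_rpow_of_nonpos hρ (by linarith) (by linarith)
  calc ρ * |log (ε + ρ)| ≤ ρ * (((ε + ρ) ^ η + (ε + ρ) ^ (-η)) / η) :=
        mul_le_mul_of_nonneg_left (abs_log_le_rpow_add_rpow_neg_div hx hη) hρ.le
    _ ≤ ρ * ((1 + ρ ^ η + ρ ^ (-η)) / η) := by gcongr
    _ = (ρ * ρ ^ (-η) + ρ + ρ * ρ ^ η) / η := by ring
    _ = (ρ ^ (1 - η) + ρ + ρ ^ (1 + η)) / η := by
        rw [sub_eq_add_neg, rpow_add hρ, rpow_add hρ, rpow_one]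

lemma abs_mul_log_add_sub_le {ε ρ : ℝ} (hε : 0 < ε) (hρ : 0 ≤ ρ) :
    |(ε + ρ) * log (ε + ρ) - ρ - ε * log ε| ≤ 2 * ρ + ρ * |log (ε + ρ)| := by
  have hx : 0 < ε + ρ := by positivity
  have h_incr_nonneg : 0 ≤ ε * (log (ε + ρ) - log ε) :=
    mul_nonneg hε.le (sub_nonneg.2 (log_le_log hε (by linarith)))
  have h_incr_le : ε * (log (ε + ρ) - log ε) ≤ ρ :=
    calc ε * (log (ε + ρ) - log ε) = ε * log ((ε + ρ) / ε) := by
          rw [log_div hx.ne' hε.ne']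
      _ ≤ ε * ((ε + ρ) / ε - 1) :=
          mul_le_mul_of_nonneg_left (log_le_sub_one_of_pos (by positivity)) hε.le
      _ = ρ := by field_simp; ring
  have h_log_le : ρ * log (ε + ρ) ≤ ρ * |log (ε + ρ)| :=
    mul_le_mul_of_nonneg_left (le_abs_self _) hρ
  have h_neg_log_le : -(ρ * log (ε + ρ)) ≤ ρ * |log (ε + ρ)| := by
    rw [← mul_neg]
    exact mul_le_mul_of_nonneg_left (neg_le_abs _) hρ
  have h_split : (ε + ρ) * log (ε + ρ) - ρ - ε * log ε
      = ε * (log (ε + ρ) - log ε) + ρ * log (ε + ρ) - ρ := by ring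
  rw [h_split, abs_le]
  constructor <;> linarith

end Real

/-- For `η ∈ (0,1]` there is `C > 0` such that for every `ε ∈ (0,1)` and every `a ≥ 0`,
`|(ε+a²)log(ε+a²) − a² − ε log ε| ≤ C(a² + a^{2−2η} + a^{2+2η})`. -/
theorem stmt_12 (η : ℝ) (hη : η ∈ Set.Ioc (0:ℝ) 1) :
    ∃ C : ℝ, 0 < C ∧ ∀ ε ∈ Set.Ioo (0:ℝ) 1, ∀ a : ℝ, 0 ≤ a →
      |(ε + a ^ 2) * Real.log (ε + a ^ 2) - a ^ 2 - ε * Real.log ε| ≤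
        C * (a ^ 2 + a ^ (2 - 2 * η) + a ^ (2 + 2 * η)) := by
  obtain ⟨hη0, hη1⟩ := hη
  refine ⟨3 / η, by positivity, fun ε ⟨hε0, hε1⟩ a ha => ?_⟩
  have hρ : 0 ≤ a ^ 2 := sq_nonneg a
  have h_pow (s : ℝ) : a ^ (2 * s) = (a ^ 2) ^ s := by
    exact_mod_cast rpow_natCast_mul ha 2 s
  rw [show 2 - 2 * η = 2 * (1 - η) by ring, show 2 + 2 * η = 2 * (1 + η) by ring,
    h_pow, h_pow]
  have h_log := mul_abs_log_add_le hε0.le hε1.le hρ hη0 hη1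
  have h_two : 2 * a ^ 2 ≤ 2 * a ^ 2 / η := le_div_self (by positivity) hη0 hη1
  calc _ ≤ 2 * a ^ 2 + a ^ 2 * |log (ε + a ^ 2)| := abs_mul_log_add_sub_le hε0 hρ
    _ ≤ 2 * a ^ 2 / η + ((a ^ 2) ^ (1 - η) + a ^ 2 + (a ^ 2) ^ (1 + η)) / η :=
        add_le_add h_two h_log
    _ ≤ 3 / η * (a ^ 2 + (a ^ 2) ^ (1 - η) + (a ^ 2) ^ (1 + η)) := by
        have h_rpow : 0 ≤ ((a ^ 2) ^ (1 - η) + (a ^ 2) ^ (1 + η)) / η := by positivity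
        have h_gap : 3 / η * (a ^ 2 + (a ^ 2) ^ (1 - η) + (a ^ 2) ^ (1 + η))
            - (2 * a ^ 2 / η + ((a ^ 2) ^ (1 - η) + a ^ 2 + (a ^ 2) ^ (1 + η)) / η)
            = 2 * (((a ^ 2) ^ (1 - η) + (a ^ 2) ^ (1 + η)) / η) := by ring
        linarith
end

section
/- Let ε ∈ (0,1) and define h(s) = log((s²+ε)/(1+εs²)) for s ≥ 0. Then for all real numbers 0 ≤ y ≤ x, (x+y)·(h(x) − h(y)) ≤ (4 + 2|log ε|)·(x − y). -/
/-!
Write `h(s) = regLog ε (s²)`. Since `(r + ε) / (1 + ε r)` lies in `[ε, 1/ε]`, `h` oscillates by at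
most `2 |log ε|`, which controls `(x - y)(h x - h y)`. For the remaining part `2y (h x - h y)` of
`(x + y)(h x - h y)`, note that `regLog ε r - log r` is antitone, so `h x - h y ≤ 2 (log x - log y)`,
and `y (log x - log y) ≤ x - y` by `log t ≤ t - 1`.
-/

open Real

noncomputable def regLog (ε r : ℝ) : ℝ := log ((r + ε) / (1 + ε * r))

section regLog

variable {ε r s : ℝ}

lemma log_le_regLog (hε0 : 0 < ε) (hε1 : ε ≤ 1) (hr : 0 ≤ r) : log ε ≤ regLog ε r := by
  refine log_le_log hε0 ?_
  rw [le_div_iff₀ (by positivity)]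
  nlinarith [mul_nonneg hr (mul_nonneg hε0.le (sub_nonneg.2 hε1))]

lemma regLog_le_neg_log (hε0 : 0 < ε) (hε1 : ε ≤ 1) (hr : 0 ≤ r) : regLog ε r ≤ -log ε := by
  rw [← log_inv]
  refine log_le_log (by positivity) ?_
  rw [div_le_iff₀ (by positivity), inv_mul_eq_div, le_div_iff₀ hε0]
  nlinarith

lemma regLog_sub_le_abs_log (hε0 : 0 < ε) (hε1 : ε ≤ 1) (hr : 0 ≤ r) (hs : 0 ≤ s) :
    regLog ε r - regLog ε s ≤ 2 * |log ε| := by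
  rw [abs_of_nonpos (log_nonpos hε0.le hε1)]
  linarith [regLog_le_neg_log hε0 hε1 hr, log_le_regLog hε0 hε1 hs]

/-- `(r + ε) / (r (1 + ε r)) = (1 + ε / r) / (1 + ε r)` decreases in `r`. -/
lemma regLog_sub_le_log_sub (hε : 0 ≤ ε) (hs : 0 < s) (hsr : s ≤ r) :
    regLog ε r - regLog ε s ≤ log r - log s := by
  have hr : 0 < r := hs.trans_le hsr
  rw [regLog, regLog, ← log_div (by positivity) (by positivity),
    ← log_div hr.ne' hs.ne']
  refine log_le_log (by positivity) ?_
  rw [div_le_div_iff₀ (by positivity) hs, div_mul_eq_mul_div, ← mul_div_assoc,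
    div_le_div_iff₀ (by positivity) (by positivity)]
  nlinarith [mul_nonneg hε (sub_nonneg.2 hsr), mul_nonneg (mul_nonneg hε (mul_nonneg hr.le hs.le))
    (sub_nonneg.2 hsr), mul_nonneg (mul_nonneg (mul_nonneg hε hε) (sub_nonneg.2 hsr))
    (add_nonneg hr.le hs.le)]

end regLog

lemma mul_log_sub_log_le {x y : ℝ} (hy : 0 < y) (hx : 0 < x) : y * (log x - log y) ≤ x - y := by
  have := log_le_sub_one_of_pos (div_pos hx hy)
  rw [log_div hx.ne' hy.ne'] at this
  calc y * (log x - log y) ≤ y * (x / y - 1) := mul_le_mul_of_nonneg_left this hy.le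
    _ = x - y := by field_simp

lemma mul_regLog_sq_sub_le {ε x y : ℝ} (hε : 0 ≤ ε) (hy : 0 ≤ y) (hyx : y ≤ x) :
    y * (regLog ε (x ^ 2) - regLog ε (y ^ 2)) ≤ 2 * (x - y) := by
  rcases hy.eq_or_lt with rfl | hy
  · linarith
  have hx := hy.trans_le hyx
  have hlog := regLog_sub_le_log_sub hε (pow_pos hy 2) (pow_le_pow_left₀ hy.le hyx 2)
  rw [log_pow, log_pow, Nat.cast_ofNat] at hlog
  calc y * (regLog ε (x ^ 2) - regLog ε (y ^ 2)) ≤ y * (2 * log x - 2 * log y) :=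
        mul_le_mul_of_nonneg_left hlog hy.le
    _ = 2 * (y * (log x - log y)) := by ring
    _ ≤ 2 * (x - y) := by linarith [mul_log_sub_log_le hy hx]

/-- For `ε ∈ (0,1)` and `h(s) = log((s²+ε)/(1+εs²))`, for all `0 ≤ y ≤ x`,
`(x+y)(h(x) − h(y)) ≤ (4 + 2|log ε|)(x − y)`. -/
theorem stmt_16 (ε : ℝ) (hε : ε ∈ Set.Ioo (0:ℝ) 1) (x y : ℝ)
    (hy : 0 ≤ y) (hyx : y ≤ x) :
    (x + y) * (Real.log ((x ^ 2 + ε) / (1 + ε * x ^ 2)) -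
        Real.log ((y ^ 2 + ε) / (1 + ε * y ^ 2))) ≤
      (4 + 2 * |Real.log ε|) * (x - y) := by
  obtain ⟨hε0, hε1⟩ := hε
  change (x + y) * (regLog ε (x ^ 2) - regLog ε (y ^ 2)) ≤ _
  have hosc := regLog_sub_le_abs_log hε0 hε1.le (sq_nonneg x) (sq_nonneg y)
  calc (x + y) * (regLog ε (x ^ 2) - regLog ε (y ^ 2))
        = (x - y) * (regLog ε (x ^ 2) - regLog ε (y ^ 2))
          + 2 * (y * (regLog ε (x ^ 2) - regLog ε (y ^ 2))) := by ring
    _ ≤ (x - y) * (2 * |log ε|) + 2 * (2 * (x - y)) :=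
        add_le_add (mul_le_mul_of_nonneg_left hosc (sub_nonneg.2 hyx))
          (by linarith [mul_regLog_sq_sub_le hε0.le hy hyx])
    _ = (4 + 2 * |log ε|) * (x - y) := by ring
end
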